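/- Let h ≥ 3 and w ≥ 3, and let s and t be proper 3-colorings of the h×w toroidal grid. If the A-parity of s differs from the A-parity of t, then there is no recoloring schedule from s to t using colors {1,2,3,4}. -/

import Mathlib

open SimpleGraph

/-- A proper `m`-coloring: colors in `{1,…,m}`, adjacent vertices get distinct colors. -/
def IsProperColoring {V : Type*} (G : SimpleGraph V) (m : ℕ) (x : V → ℕ) : Prop :=
  (∀ v, x v ∈ Finset.Icc 1 m) ∧ ∀ ⦃u v : V⦄, G.Adj u v → x u ≠ x v

/-- A recoloring schedule from `s` to `t` of length `ℓ` using colors `{1,…,m}`: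
a sequence of proper `m`-colorings `X 0 = s, …, X ℓ = t` such that at each step the set of
vertices that change color is an independent set. -/
def IsRecolorSchedule {V : Type*} (G : SimpleGraph V) (m : ℕ) (s t : V → ℕ)
    (ℓ : ℕ) (X : ℕ → V → ℕ) : Prop :=
  X 0 = s ∧ X ℓ = t ∧ (∀ i ≤ ℓ, IsProperColoring G m (X i)) ∧
  ∀ i, 1 ≤ i → i ≤ ℓ → ∀ ⦃u v : V⦄, G.Adj u v → X (i - 1) u = X i u ∨ X (i - 1) v = X i v

/-- The `h × w` toroidal grid: vertices `(a, b) ∈ (ℤ/hℤ) × (ℤ/wℤ)`, with `(a, b)` adjacent to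
`(c, d)` iff either `a = c` and `b - d ≡ ±1 (mod w)`, or `b = d` and `a - c ≡ ±1 (mod h)`. -/
def torGrid (h w : ℕ) : SimpleGraph (ZMod h × ZMod w) where
  Adj x y := x ≠ y ∧
    ((x.1 = y.1 ∧ (x.2 - y.2 = 1 ∨ y.2 - x.2 = 1)) ∨
     (x.2 = y.2 ∧ (x.1 - y.1 = 1 ∨ y.1 - x.1 = 1)))
  symm := by
    constructor
    rintro x y ⟨hne, (⟨h1, h2⟩ | ⟨h1, h2⟩)⟩
    · exact ⟨hne.symm, Or.inl ⟨h1.symm, h2.symm⟩⟩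
    · exact ⟨hne.symm, Or.inr ⟨h1.symm, h2.symm⟩⟩
  loopless := by
    constructor
    rintro x ⟨hne, -⟩
    exact hne rfl

/-- The number of type-A tiles of a coloring `x` of the `h × w` toroidal grid: positions
`(i, j)` where the `2 × 2` tile `(x(i,j), x(i,j+1), x(i+1,j), x(i+1,j+1))` equals
`(2,3,3,1)` or `(1,3,3,2)`. -/
noncomputable def ATileCount (h w : ℕ) (x : ZMod h × ZMod w → ℕ) : ℕ :=
  {p : ZMod h × ZMod w |
    (x (p.1, p.2), x (p.1, p.2 + 1), x (p.1 + 1, p.2), x (p.1 + 1, p.2 + 1)) = (2, 3, 3, 1) ∨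
    (x (p.1, p.2), x (p.1, p.2 + 1), x (p.1 + 1, p.2), x (p.1 + 1, p.2 + 1)) = (1, 3, 3, 2)
  }.ncard

/-!
Recoloring an independent set amounts to recoloring its vertices one at a time, through proper
colorings. So it suffices to find a quantity that no single-vertex recoloring of a proper
4-coloring of the torus can change, and that equals the A-parity on proper 3-colorings.

Such a quantity is the parity of the number of `2 × 2` tiles whose pattern lies in a fixed set
of sixteen patterns. A recoloring of one vertex only affects the four tiles containing it, so
its invariance is a finite check on the colors of the vertex and its eight surrounding cells.
-/

open Function

section Recoloring

variable {V : Type*} {G : SimpleGraph V} {m : ℕ}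

theorem IsProperColoring.piecewise [DecidableEq V] {x y : V → ℕ}
    (hx : IsProperColoring G m x) (hy : IsProperColoring G m y)
    (hxy : ∀ ⦃u v⦄, G.Adj u v → x u = y u ∨ x v = y v) (S : Finset V) :
    IsProperColoring G m (S.piecewise y x) := by
  refine ⟨fun v => ?_, fun u v huv => ?_⟩
  · by_cases hv : v ∈ S <;> simp [hv, hx.1 v, hy.1 v]
  · have hx' := hx.2 huv
    have hy' := hy.2 huv
    rcases hxy huv with h | h <;> by_cases hu : u ∈ S <;> by_cases hv : v ∈ S <;>
      simp_all [Finset.piecewise]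

theorem IsProperColoring.apply_eq_of_independent [Fintype V] [DecidableEq V] {β : Type*}
    {F : (V → ℕ) → β}
    (hF : ∀ x v c, IsProperColoring G m x → IsProperColoring G m (update x v c) →
      F (update x v c) = F x)
    {x y : V → ℕ} (hx : IsProperColoring G m x) (hy : IsProperColoring G m y)
    (hxy : ∀ ⦃u v⦄, G.Adj u v → x u = y u ∨ x v = y v) :
    F y = F x := by
  have key : ∀ S : Finset V, F (S.piecewise y x) = F x := by
    intro S
    induction S using Finset.induction_on with
    | empty => rw [Finset.piecewise_empty]
    | insert v S _ ih =>
      have hS := hx.piecewise hy hxy (insert v S)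
      rw [Finset.piecewise_insert] at hS ⊢
      rw [hF _ _ _ (hx.piecewise hy hxy S) hS, ih]
  simpa using key Finset.univ

theorem IsRecolorSchedule.apply_eq [Fintype V] [DecidableEq V] {β : Type*}
    {F : (V → ℕ) → β}
    (hF : ∀ x v c, IsProperColoring G m x → IsProperColoring G m (update x v c) →
      F (update x v c) = F x)
    {s t : V → ℕ} {ℓ : ℕ} {X : ℕ → V → ℕ} (hX : IsRecolorSchedule G m s t ℓ X) :
    F t = F s := by
  obtain ⟨h0, hℓ, hproper, hstep⟩ := hX
  have key : ∀ i ≤ ℓ, F (X i) = F s := by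
    intro i
    induction i with
    | zero => intro _; rw [h0]
    | succ i ih =>
      intro hi
      rw [← ih (by omega)]
      exact IsProperColoring.apply_eq_of_independent hF (hproper i (by omega)) (hproper (i + 1) hi)
        (hstep (i + 1) (by omega) hi)
  simpa [hℓ] using key ℓ le_rfl

end Recoloring

/-- The patterns `(top left, top right, bottom left, bottom right)` of the tiles counted by the
invariant. They were found by solving, over `GF(2)`, the linear system expressing
`patternWeight_around_eq` together with `mem_parityPatterns_iff_of_le_three`. -/
def parityPatterns : Finset (ℕ × ℕ × ℕ × ℕ) :=
  {(1, 2, 2, 4), (1, 3, 3, 2), (1, 3, 3, 4), (1, 3, 4, 2), (2, 1, 4, 3), (2, 3, 3, 1),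
   (2, 3, 4, 1), (2, 4, 1, 3), (3, 1, 2, 4), (3, 1, 4, 2), (3, 2, 2, 4), (3, 4, 1, 2),
   (4, 1, 2, 3), (4, 2, 2, 1), (4, 2, 2, 3), (4, 3, 3, 1)}

def patternWeight (q : ℕ × ℕ × ℕ × ℕ) : ZMod 2 := if q ∈ parityPatterns then 1 else 0

theorem mem_parityPatterns_iff_of_le_three :
    ∀ a ∈ Finset.Icc 1 3, ∀ b ∈ Finset.Icc 1 3, ∀ c ∈ Finset.Icc 1 3, ∀ d ∈ Finset.Icc 1 3,
      ((a, b, c, d) ∈ parityPatterns ↔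
        (a, b, c, d) = (2, 3, 3, 1) ∨ (a, b, c, d) = (1, 3, 3, 2)) := by
  decide

theorem patternWeight_around_eq :
    ∀ n ∈ Finset.Icc 1 4, ∀ e ∈ Finset.Icc 1 4, ∀ s ∈ Finset.Icc 1 4, ∀ w ∈ Finset.Icc 1 4,
    ∀ a ∈ Finset.Icc 1 4, n ≠ a → w ≠ a → a ≠ e → a ≠ s →
    ∀ b ∈ Finset.Icc 1 4, n ≠ b → w ≠ b → b ≠ e → b ≠ s →
    ∀ ne ∈ Finset.Icc 1 4, n ≠ ne → ne ≠ e →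
    ∀ se ∈ Finset.Icc 1 4, e ≠ se → s ≠ se →
    ∀ sw ∈ Finset.Icc 1 4, w ≠ sw → sw ≠ s →
    ∀ nw ∈ Finset.Icc 1 4, nw ≠ w → nw ≠ n →
      patternWeight (nw, n, w, a) + (patternWeight (n, ne, a, e) +
        (patternWeight (w, a, sw, s) + patternWeight (a, e, s, se))) =
      patternWeight (nw, n, w, b) + (patternWeight (n, ne, b, e) +
        (patternWeight (w, b, sw, s) + patternWeight (b, e, s, se))) := by
  decide +kernel

section TorGrid

variable {h w : ℕ}

theorem torGrid_adj_right [Fact (1 < w)] (a : ZMod h) (b : ZMod w) :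
    (torGrid h w).Adj (a, b) (a, b + 1) :=
  ⟨by simp, Or.inl ⟨rfl, Or.inr (by ring)⟩⟩

theorem torGrid_adj_down [Fact (1 < h)] (a : ZMod h) (b : ZMod w) :
    (torGrid h w).Adj (a, b) (a + 1, b) :=
  ⟨by simp, Or.inr ⟨rfl, Or.inr (by ring)⟩⟩

theorem IsProperColoring.ne_right [Fact (1 < w)] {m : ℕ} {x : ZMod h × ZMod w → ℕ}
    (hx : IsProperColoring (torGrid h w) m x) (a : ZMod h) (b : ZMod w) :
    x (a, b) ≠ x (a, b + 1) :=
  hx.2 (torGrid_adj_right a b)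

theorem IsProperColoring.ne_down [Fact (1 < h)] {m : ℕ} {x : ZMod h × ZMod w → ℕ}
    (hx : IsProperColoring (torGrid h w) m x) (a : ZMod h) (b : ZMod w) :
    x (a, b) ≠ x (a + 1, b) :=
  hx.2 (torGrid_adj_down a b)

def tile (x : ZMod h × ZMod w → ℕ) (p : ZMod h × ZMod w) : ℕ × ℕ × ℕ × ℕ :=
  (x p, x (p.1, p.2 + 1), x (p.1 + 1, p.2), x (p.1 + 1, p.2 + 1))

def patternParity [NeZero h] [NeZero w] (x : ZMod h × ZMod w → ℕ) : ZMod 2 :=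
  ∑ p, patternWeight (tile x p)

theorem patternParity_update [Fact (1 < h)] [Fact (1 < w)] {x : ZMod h × ZMod w → ℕ}
    {v : ZMod h × ZMod w} {c : ℕ} (hx : IsProperColoring (torGrid h w) 4 x)
    (hy : IsProperColoring (torGrid h w) 4 (update x v c)) :
    patternParity (update x v c) = patternParity x := by
  obtain ⟨i, j, rfl⟩ : ∃ i j, v = (i + 1, j + 1) := ⟨v.1 - 1, v.2 - 1, by simp⟩
  set T : Finset (ZMod h × ZMod w) := {(i, j), (i, j + 1), (i + 1, j), (i + 1, j + 1)}
  have h_off : ∀ p ∉ T, tile (update x (i + 1, j + 1) c) p = tile x p := by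
    rintro ⟨a, b⟩ hp
    simp only [tile, update_apply]
    rw [if_neg, if_neg, if_neg, if_neg] <;>
    · intro hab
      simp only [Prod.mk.injEq, add_left_inj] at hab
      obtain ⟨rfl, rfl⟩ := hab
      simp [T] at hp
  have h_on : ∑ p ∈ T, patternWeight (tile (update x (i + 1, j + 1) c) p) =
      ∑ p ∈ T, patternWeight (tile x p) := by
    simp only [T, Finset.sum_insert, Finset.sum_singleton, Finset.mem_insert, Finset.mem_singleton,
      tile, update_apply, Prod.mk.injEq, add_left_inj, left_eq_add, add_eq_left, one_ne_zero,
      and_false, and_true, and_self, or_self, not_false_eq_true, ↓reduceIte]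
    have hcn : x (i, j + 1) ≠ c := by simpa using hy.ne_down i (j + 1)
    have hcw : x (i + 1, j) ≠ c := by simpa using hy.ne_right (i + 1) j
    have hce : c ≠ x (i + 1, j + 1 + 1) := by simpa using hy.ne_right (i + 1) (j + 1)
    have hcs : c ≠ x (i + 1 + 1, j + 1) := by simpa using hy.ne_down (i + 1) (j + 1)
    have hc : c ∈ Finset.Icc 1 4 := by simpa using hy.1 (i + 1, j + 1)
    symm
    apply patternWeight_around_eq <;> first
      | exact hx.1 _ | exact hx.ne_down _ _ | exact hx.ne_right _ _ | assumption
  unfold patternParity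
  rw [← Finset.sum_add_sum_compl T, ← Finset.sum_add_sum_compl T, h_on]
  congr 1
  exact Finset.sum_congr rfl fun p hp => by rw [h_off p (Finset.mem_compl.mp hp)]

theorem ATileCount_cast_eq_patternParity [NeZero h] [NeZero w] {x : ZMod h × ZMod w → ℕ}
    (hx : IsProperColoring (torGrid h w) 3 x) :
    (ATileCount h w x : ZMod 2) = patternParity x := by
  classical
  rw [ATileCount, Set.ncard_eq_toFinset_card', Set.toFinset_ofPred, Finset.natCast_card_filter,
    patternParity]
  refine Finset.sum_congr rfl fun p _ => if_congr ?_ rfl rfl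
  exact (mem_parityPatterns_iff_of_le_three _ (hx.1 _) _ (hx.1 _) _ (hx.1 _) _ (hx.1 _)).symm

end TorGrid

/-- If two proper 3-colorings of the `h × w` toroidal grid have different A-parities, then
there is no 3+1 recoloring schedule between them. -/
theorem stmt_19 (h w : ℕ) (hh : 3 ≤ h) (hw : 3 ≤ w)
    (s t : ZMod h × ZMod w → ℕ)
    (hs : IsProperColoring (torGrid h w) 3 s) (ht : IsProperColoring (torGrid h w) 3 t)
    (hpar : ATileCount h w s % 2 ≠ ATileCount h w t % 2) :
    ¬ ∃ (ℓ : ℕ) (X : ℕ → ZMod h × ZMod w → ℕ),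
      IsRecolorSchedule (torGrid h w) 4 s t ℓ X := by
  have : Fact (1 < h) := ⟨by omega⟩
  have : Fact (1 < w) := ⟨by omega⟩
  rintro ⟨ℓ, X, hX⟩
  have h_inv : patternParity t = patternParity s :=
    hX.apply_eq fun _ _ _ hx hy => patternParity_update hx hy
  apply hpar
  rw [← ZMod.natCast_eq_natCast_iff', ATileCount_cast_eq_patternParity hs,
    ATileCount_cast_eq_patternParity ht, h_inv]
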